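/- arXiv:2003.01574 — 4 statements merged into one kernel-verified Lean document; each statement's English description precedes it below -/
import Mathlib

section
/- Let d ≥ 1 and let w_1, …, w_k be non-empty words in the alphabet {1,…,d}. Then in the shuffle algebra T(ℝ^d): w_1 ⧢ w_2 ⧢ ⋯ ⧢ w_k = Σ_{σ∈S_k} w_{σ(1)} ≻ w_{σ(2)} ≻ ⋯ ≻ w_{σ(k)}, where the iterated right half-shuffle products on the right-hand side are bracketed from the left. -/
open scoped BigOperators

namespace ShufflePaper

variable {α : Type*}

/-- All shuffles (interleavings) of two words, with multiplicity. -/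
def shuffles : List α → List α → Multiset (List α)
  | [], ys => {ys}
  | x :: xs, [] => {x :: xs}
  | x :: xs, y :: ys =>
      ((shuffles xs (y :: ys)).map (x :: ·)) + ((shuffles (x :: xs) ys).map (y :: ·))
  termination_by l₁ l₂ => l₁.length + l₂.length

/-- The element of the shuffle algebra corresponding to a multiset of words. -/
noncomputable def ofMS (m : Multiset (List α)) : List α →₀ ℝ :=
  (m.map fun l => Finsupp.single l (1 : ℝ)).sum

/-- The shuffle product on the shuffle algebra `T(ℝ^d)` (bilinear extension). -/
noncomputable def sh (x y : List α →₀ ℝ) : List α →₀ ℝ :=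
  x.sum fun v a => y.sum fun w b => (a * b) • ofMS (shuffles v w)

/-- Iterated shuffle product of a list of elements (empty word is the unit). -/
noncomputable def shProd : List (List α →₀ ℝ) → (List α →₀ ℝ)
  | [] => Finsupp.single [] 1
  | x :: xs => sh x (shProd xs)

/-- Determinant in the commutative ring `(T(ℝ^d), ⧢)` via the Leibniz formula. -/
noncomputable def detSh {n : ℕ} (M : Fin n → Fin n → (List α →₀ ℝ)) : List α →₀ ℝ :=
  ∑ σ : Equiv.Perm (Fin n), (Equiv.Perm.sign σ : ℤ) •
    shProd ((List.finRange n).map fun i => M (σ i) i)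

/-- The matrix `W_d` whose `(i,j)` entry is the two-letter word `ij`. -/
noncomputable def W (d : ℕ) : Fin d → Fin d → (List (Fin d) →₀ ℝ) :=
  fun i j => Finsupp.single [i, j] 1

/-- `inv(t_{1,d}) = Σ_σ sign(σ) σ(1)⋯σ(d)`. -/
noncomputable def invT1 (d : ℕ) : List (Fin d) →₀ ℝ :=
  ∑ σ : Equiv.Perm (Fin d), (Equiv.Perm.sign σ : ℤ) •
    Finsupp.single ((List.finRange d).map σ) 1

/-- `inv(t_{2,d}) = Σ_{σ,τ} sign(σ)sign(τ) σ(1)τ(1)⋯σ(d)τ(d)`. -/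
noncomputable def invT2 (d : ℕ) : List (Fin d) →₀ ℝ :=
  ∑ σ : Equiv.Perm (Fin d), ∑ τ : Equiv.Perm (Fin d),
    ((Equiv.Perm.sign σ : ℤ) * (Equiv.Perm.sign τ : ℤ)) •
      Finsupp.single ((List.finRange d).flatMap fun i => [σ i, τ i]) 1

/- Right half-shuffle of two words: `u ≻ (v·i) = (u ⧢ v)·i`; zero if the
second word is empty. -/
open Classical in
noncomputable def hsW (u w : List α) : List α →₀ ℝ :=
  if h : w = [] then 0
  else ofMS ((shuffles u w.dropLast).map fun l => l ++ [w.getLast h])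

/-- Right half-shuffle product (bilinear extension). -/
noncomputable def hs (x y : List α →₀ ℝ) : List α →₀ ℝ :=
  x.sum fun v a => y.sum fun w b => (a * b) • hsW v w

/-- Iterated right half-shuffle of a list of words, bracketed from the left. -/
noncomputable def hsList : List (List α) → (List α →₀ ℝ)
  | [] => 0
  | w :: ws => ws.foldl (fun acc u => hs acc (Finsupp.single u 1)) (Finsupp.single w 1)

/-- Action of `σ ∈ S_n` on the span of words, permuting letter positions of
words of length `n` (letter in position `σ(k)` of `σ·w` is `w_k`); words of
other lengths are left untouched. -/
noncomputable def permAct {d : ℕ} (n : ℕ) (σ : Equiv.Perm (Fin n))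
    (x : List (Fin d) →₀ ℝ) : List (Fin d) →₀ ℝ :=
  x.sum fun w a =>
    if h : w.length = n then
      Finsupp.single (List.ofFn fun p : Fin n => w.get (Fin.cast h.symm (σ⁻¹ p))) a
    else Finsupp.single w a

/-- The subgroup `H ≤ S_{2d}` generated by the transpositions `(2i−1, 2i+1)` and
`(2i, 2i+2)`, `1 ≤ i ≤ d−1` (0-indexed: all swaps `(k, k+2)` with `k+2 < 2d`). -/
def Hgrp (d : ℕ) : Subgroup (Equiv.Perm (Fin (2 * d))) :=
  Subgroup.closure
    {g | ∃ k : ℕ, ∃ hk : k + 2 < 2 * d, g = Equiv.swap ⟨k, by omega⟩ ⟨k + 2, hk⟩}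

/-- Pfaffian in the shuffle algebra, via the sum over permutations. -/
noncomputable def pfSh {n : ℕ} (A : Fin n → Fin n → (List α →₀ ℝ)) : List α →₀ ℝ :=
  ((2 ^ (n / 2) * (n / 2).factorial : ℝ))⁻¹ •
    ∑ π : Equiv.Perm (Fin n), (Equiv.Perm.sign π : ℤ) •
      shProd ((List.finRange (n / 2)).map fun i : Fin (n / 2) =>
        A (π ⟨2 * (i : ℕ), by have := i.isLt; omega⟩)
          (π ⟨2 * (i : ℕ) + 1, by have := i.isLt; omega⟩))

/-- The matrix `Z_d` from de Bruijn's formula, odd case. -/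
noncomputable def Z (d : ℕ) : Fin (d + 1) → Fin (d + 1) → (List (Fin d) →₀ ℝ) :=
  fun i j =>
    if hi : (i : ℕ) < d then
      if hj : (j : ℕ) < d then
        Finsupp.single [⟨i, hi⟩, ⟨j, hj⟩] 1 - Finsupp.single [⟨j, hj⟩, ⟨i, hi⟩] 1
      else Finsupp.single [⟨i, hi⟩] 1
    else if hj : (j : ℕ) < d then -Finsupp.single [⟨j, hj⟩] 1
    else 0

/-! For a non-empty word `u` and any word `t`, sorting the shuffles of `u` and `t` by the word
their last letter comes from gives `u ⧢ t = t ≻ u + u ≻ t`, and shuffle associativity gives the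
half-shuffle identity `u ≻ (t ≻ w) = (u ⧢ t) ≻ w`. With these, induction on `k` shows that
`w₁ ⧢ ⋯ ⧢ wₖ = ∑ₚ (⧢_{i ≠ p} wᵢ) ≻ wₚ`; expanding the inner shuffles by the induction
hypothesis and splitting a permutation according to its last value gives the sum over `S_k`.

Everything is proved for `ℕ`-combinations of words, encoded as multisets, and transported
to `T(ℝ^d)` along `ofMS`. -/

open Equiv in
lemma sum_perm_fin_succ {M : Type*} [AddCommMonoid M] {n : ℕ}
    (F : Fin (n + 1) → (Fin n → Fin (n + 1)) → M) :
    ∑ σ : Perm (Fin (n + 1)), F (σ 0) (σ ∘ Fin.succ) =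
      ∑ p, ∑ e : Perm (Fin n), F p (p.succAbove ∘ e) := by
  rw [← Equiv.sum_comp Perm.decomposeFin.symm, Fintype.sum_prod_type]
  refine Fintype.sum_congr _ _ fun p => ?_
  have hsucc : ∀ e : Perm (Fin n),
      Perm.decomposeFin.symm (p, e) ∘ Fin.succ = swap 0 p ∘ Fin.succ ∘ e :=
    fun e => funext fun i => Perm.decomposeFin_symm_apply_succ e p i
  simp only [Perm.decomposeFin_symm_apply_zero, hsucc]
  cases p using Fin.cases with
  | zero => simp [Fin.succAbove_zero]
  | succ i =>
    have hcycle : swap 0 i.succ ∘ Fin.succ = i.succ.succAbove ∘ i.cycleRange :=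
      funext fun j => (Fin.succAbove_cycleRange i j).symm
    simp only [← Function.comp_assoc, hcycle]
    exact Equiv.sum_comp (Equiv.mulLeft i.cycleRange) fun e => F i.succ (i.succ.succAbove ∘ e)

lemma sum_perm_fin_succ_last {M : Type*} [AddCommMonoid M] {n : ℕ}
    (F : Fin (n + 1) → (Fin n → Fin (n + 1)) → M) :
    ∑ σ : Equiv.Perm (Fin (n + 1)), F (σ (Fin.last n)) (σ ∘ Fin.castSucc) =
      ∑ p, ∑ e : Equiv.Perm (Fin n), F p (p.succAbove ∘ e) := by
  rw [← sum_perm_fin_succ, ← Equiv.sum_comp (Equiv.mulRight (finRotate (n + 1)))]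
  refine Fintype.sum_congr _ _ fun σ => congr_arg₂ F ?_ (funext fun i => ?_)
  · simp
  · simp [finRotate_apply, Fin.coeSucc_eq_succ]

@[simp]
lemma shuffles_nil_left (v : List α) : shuffles [] v = {v} := by
  rw [shuffles]

@[simp]
lemma shuffles_nil_right (u : List α) : shuffles u [] = {u} := by
  cases u <;> rw [shuffles]

lemma shuffles_cons_cons (x y : α) (xs ys : List α) :
    shuffles (x :: xs) (y :: ys) =
      (shuffles xs (y :: ys)).map (x :: ·) + (shuffles (x :: xs) ys).map (y :: ·) := by
  rw [shuffles]

lemma shuffles_comm (u v : List α) : shuffles u v = shuffles v u := by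
  induction u, v using shuffles.induct with
  | case1 v => simp
  | case2 x xs => simp
  | case3 x xs y ys ih₁ ih₂ => rw [shuffles_cons_cons, shuffles_cons_cons, ih₁, ih₂, add_comm]

theorem shuffles_append_singleton :
    ∀ (u v : List α) (a b : α), shuffles (u ++ [a]) (v ++ [b]) =
      (shuffles u (v ++ [b])).map (· ++ [a]) + (shuffles (u ++ [a]) v).map (· ++ [b])
  | [], [], a, b => by simp [shuffles_cons_cons, add_comm]
  | [], y :: ys, a, b => by
      have ih := shuffles_append_singleton [] ys a b
      simp only [List.nil_append, List.cons_append] at ih ⊢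
      simp only [shuffles_cons_cons, ih, shuffles_nil_left, Multiset.map_add,
        Multiset.map_singleton, Multiset.map_map, Function.comp_def, List.cons_append]
      abel
  | x :: xs, [], a, b => by
      have ih := shuffles_append_singleton xs [] a b
      simp only [List.nil_append, List.cons_append] at ih ⊢
      simp only [shuffles_cons_cons, ih, shuffles_nil_right, Multiset.map_add,
        Multiset.map_singleton, Multiset.map_map, Function.comp_def, List.cons_append]
      abel
  | x :: xs, y :: ys, a, b => by
      have ih₁ := shuffles_append_singleton xs (y :: ys) a b
      have ih₂ := shuffles_append_singleton (x :: xs) ys a b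
      simp only [List.cons_append] at ih₁ ih₂ ⊢
      rw [shuffles_cons_cons, ih₁, ih₂, shuffles_cons_cons x y xs (ys ++ [b]),
        shuffles_cons_cons x y (xs ++ [a]) ys]
      simp only [Multiset.map_add, Multiset.map_map, Function.comp_def, List.cons_append]
      abel

lemma bind_shuffles_cons_cons {β : Type*} (x y : α) (xs ys : List α)
    (g : List α → Multiset β) :
    (shuffles (x :: xs) (y :: ys)).bind g =
      (shuffles xs (y :: ys)).bind (fun s => g (x :: s)) +
        (shuffles (x :: xs) ys).bind (fun s => g (y :: s)) := by
  rw [shuffles_cons_cons, Multiset.add_bind, Multiset.bind_map, Multiset.bind_map]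

theorem shuffles_assoc :
    ∀ u v t : List α,
      (shuffles u v).bind (shuffles · t) = (shuffles v t).bind (shuffles u)
  | [], v, t => by simpa using (Multiset.bind_singleton (shuffles v t) id).symm
  | x :: xs, [], t => by simp
  | x :: xs, y :: ys, [] => by simpa using Multiset.bind_singleton (shuffles (x :: xs) (y :: ys)) id
  | x :: xs, y :: ys, z :: zs => by
      have lhs : (shuffles (x :: xs) (y :: ys)).bind (shuffles · (z :: zs)) =
          ((shuffles xs (y :: ys)).bind (shuffles · (z :: zs))).map (x :: ·) +
          ((shuffles (x :: xs) ys).bind (shuffles · (z :: zs))).map (y :: ·) +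
          ((shuffles (x :: xs) (y :: ys)).bind (shuffles · zs)).map (z :: ·) := by
        simp only [bind_shuffles_cons_cons, shuffles_cons_cons _ z, Multiset.bind_add,
          ← Multiset.map_bind, Multiset.map_add]
        abel
      have rhs : (shuffles (y :: ys) (z :: zs)).bind (shuffles (x :: xs)) =
          ((shuffles (y :: ys) (z :: zs)).bind (shuffles xs)).map (x :: ·) +
          ((shuffles ys (z :: zs)).bind (shuffles (x :: xs))).map (y :: ·) +
          ((shuffles (y :: ys) zs).bind (shuffles (x :: xs))).map (z :: ·) := by
        simp only [bind_shuffles_cons_cons, shuffles_cons_cons x, Multiset.bind_add,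
          ← Multiset.map_bind, Multiset.map_add]
        abel
      rw [lhs, rhs, shuffles_assoc xs, shuffles_assoc (x :: xs) ys, shuffles_assoc _ _ zs]
termination_by u v t => u.length + v.length + t.length

open Classical in
noncomputable def halfShuffles (u w : List α) : Multiset (List α) :=
  if h : w = [] then 0 else (shuffles u w.dropLast).map (· ++ [w.getLast h])

@[simp]
lemma halfShuffles_nil_right (u : List α) : halfShuffles u [] = 0 := by
  simp [halfShuffles]

lemma halfShuffles_append_singleton (u v : List α) (a : α) :
    halfShuffles u (v ++ [a]) = (shuffles u v).map (· ++ [a]) := by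
  simp [halfShuffles]

lemma halfShuffles_nil_left {u : List α} (hu : u ≠ []) : halfShuffles [] u = {u} := by
  obtain ⟨v, a, rfl⟩ := List.eq_nil_or_concat' u |>.resolve_left hu
  simp [halfShuffles_append_singleton]

lemma shuffles_eq_halfShuffles_add {u : List α} (hu : u ≠ []) (t : List α) :
    shuffles u t = halfShuffles t u + halfShuffles u t := by
  obtain ⟨u, a, rfl⟩ := List.eq_nil_or_concat' u |>.resolve_left hu
  rcases List.eq_nil_or_concat' t with rfl | ⟨t, b, rfl⟩
  · simp [halfShuffles_nil_left hu]
  · rw [shuffles_append_singleton, halfShuffles_append_singleton,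
      halfShuffles_append_singleton, shuffles_comm u]

lemma bind_halfShuffles_halfShuffles (u t w : List α) :
    (halfShuffles t w).bind (halfShuffles u) = (shuffles u t).bind (halfShuffles · w) := by
  rcases List.eq_nil_or_concat' w with rfl | ⟨v, a, rfl⟩
  · simp
  · simp only [halfShuffles_append_singleton, Multiset.bind_map, ← Multiset.map_bind,
      shuffles_assoc]

section

def shuffleMS (M N : Multiset (List α)) : Multiset (List α) :=
  M.bind fun u => N.bind (shuffles u)

noncomputable def halfShuffleMS (M N : Multiset (List α)) : Multiset (List α) :=
  M.bind fun u => N.bind (halfShuffles u)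

local infixl:70 " ⧢ " => shuffleMS
local infixl:70 " ≻ " => halfShuffleMS

lemma halfShuffleMS_sum_left {ι : Type*} (s : Finset ι) (M : ι → Multiset (List α))
    (N : Multiset (List α)) : (∑ i ∈ s, M i) ≻ N = ∑ i ∈ s, M i ≻ N :=
  map_sum ({ toFun := (· ≻ N), map_zero' := Multiset.zero_bind _,
              map_add' := fun _ _ => Multiset.add_bind _ _ _ } :
    Multiset (List α) →+ Multiset (List α)) M s

lemma halfShuffleMS_sum_right {ι : Type*} (s : Finset ι) (M : Multiset (List α))
    (N : ι → Multiset (List α)) : M ≻ ∑ i ∈ s, N i = ∑ i ∈ s, M ≻ N i :=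
  map_sum ({ toFun := (M ≻ ·), map_zero' := by simp [halfShuffleMS],
              map_add' := fun _ _ => by simp only [halfShuffleMS, Multiset.add_bind,
                Multiset.bind_add] } :
    Multiset (List α) →+ Multiset (List α)) N s

lemma singleton_shuffleMS {u : List α} (hu : u ≠ []) (M : Multiset (List α)) :
    {u} ⧢ M = M ≻ {u} + {u} ≻ M := by
  simp [shuffleMS, halfShuffleMS, shuffles_eq_halfShuffles_add hu, Multiset.bind_add]

lemma shuffleMS_halfShuffleMS (L M N : Multiset (List α)) : (L ⧢ M) ≻ N = L ≻ (M ≻ N) := by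
  simp only [shuffleMS, halfShuffleMS, Multiset.bind_assoc, bind_halfShuffles_halfShuffles]
  exact Multiset.bind_congr fun u _ => Multiset.bind_congr fun t _ => Multiset.bind_bind _ _

def shuffleProdMS : List (List α) → Multiset (List α)
  | [] => {[]}
  | w :: ws => {w} ⧢ shuffleProdMS ws

noncomputable def halfShuffleListMS : List (List α) → Multiset (List α)
  | [] => 0
  | w :: ws => ws.foldl (fun M u => M ≻ {u}) {w}

lemma halfShuffleListMS_append_singleton {l : List (List α)} (hl : l ≠ []) (u : List α) :
    halfShuffleListMS (l ++ [u]) = halfShuffleListMS l ≻ {u} := by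
  obtain ⟨w, ws, rfl⟩ := List.exists_cons_of_ne_nil hl
  simp [halfShuffleListMS]

lemma shuffleProdMS_ofFn_eq_sum_succAbove {n : ℕ} (w : Fin (n + 1) → List α)
    (hw : ∀ i, w i ≠ []) :
    shuffleProdMS (List.ofFn w) = ∑ p, shuffleProdMS (List.ofFn (w ∘ p.succAbove)) ≻ {w p} := by
  induction n with
  | zero =>
    simp [shuffleProdMS, shuffleMS, halfShuffleMS, halfShuffles_nil_left (hw 0)]
  | succ n ih =>
    have hsucc : ∀ q : Fin (n + 1), List.ofFn (w ∘ q.succ.succAbove) =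
        w 0 :: List.ofFn ((w ∘ Fin.succ) ∘ q.succAbove) := by
      intro q
      simp [List.ofFn_succ, Fin.succ_succAbove_succ, Function.comp_def]
    calc shuffleProdMS (List.ofFn w)
        = shuffleProdMS (List.ofFn (w ∘ Fin.succ)) ≻ {w 0} +
            {w 0} ≻ shuffleProdMS (List.ofFn (w ∘ Fin.succ)) := by
          rw [List.ofFn_succ, shuffleProdMS, singleton_shuffleMS (hw 0)]; rfl
      _ = shuffleProdMS (List.ofFn (w ∘ Fin.succ)) ≻ {w 0} +
            ∑ q : Fin (n + 1), ({w 0} ⧢ shuffleProdMS (List.ofFn ((w ∘ Fin.succ) ∘ q.succAbove)))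
              ≻ {w q.succ} := by
          rw [ih (w ∘ Fin.succ) fun i => hw _, halfShuffleMS_sum_right]
          simp only [shuffleMS_halfShuffleMS, Function.comp_apply]
      _ = ∑ p, shuffleProdMS (List.ofFn (w ∘ p.succAbove)) ≻ {w p} := by
          simp only [Fin.sum_univ_succ, hsucc, shuffleProdMS, Fin.succAbove_zero]

theorem shuffleProdMS_ofFn_eq_sum_perm {n : ℕ} (w : Fin (n + 1) → List α)
    (hw : ∀ i, w i ≠ []) :
    shuffleProdMS (List.ofFn w) =
      ∑ σ : Equiv.Perm (Fin (n + 1)), halfShuffleListMS (List.ofFn (w ∘ σ)) := by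
  induction n with
  | zero => simp [shuffleProdMS, shuffleMS, halfShuffleListMS]
  | succ n ih =>
    symm
    calc ∑ σ : Equiv.Perm (Fin (n + 2)), halfShuffleListMS (List.ofFn (w ∘ σ))
        = ∑ σ : Equiv.Perm (Fin (n + 2)),
            halfShuffleListMS (List.ofFn (w ∘ σ ∘ Fin.castSucc)) ≻ {w (σ (Fin.last _))} := by
          refine Fintype.sum_congr _ _ fun σ => ?_
          rw [List.ofFn_succ', List.concat_eq_append, halfShuffleListMS_append_singleton (by simp)]
          rfl
      _ = ∑ p, ∑ e : Equiv.Perm (Fin (n + 1)),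
            halfShuffleListMS (List.ofFn (w ∘ p.succAbove ∘ e)) ≻ {w p} :=
          sum_perm_fin_succ_last fun p f => halfShuffleListMS (List.ofFn (w ∘ f)) ≻ {w p}
      _ = ∑ p, shuffleProdMS (List.ofFn (w ∘ p.succAbove)) ≻ {w p} := by
          refine Fintype.sum_congr _ _ fun p => ?_
          rw [← halfShuffleMS_sum_left, ih (w ∘ p.succAbove) fun i => hw _]
          rfl
      _ = shuffleProdMS (List.ofFn w) := (shuffleProdMS_ofFn_eq_sum_succAbove w hw).symm

lemma ofMS_add (M N : Multiset (List α)) : ofMS (M + N) = ofMS M + ofMS N := by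
  simp [ofMS]

lemma ofMS_singleton (u : List α) : ofMS {u} = Finsupp.single u 1 := by
  simp [ofMS]

lemma ofMS_bind {β : Type*} (m : Multiset β) (f : β → Multiset (List α)) :
    ofMS (m.bind f) = (m.map fun b => ofMS (f b)).sum := by
  simp [ofMS, Multiset.map_bind, Multiset.sum_bind]

lemma ofMS_sum {ι : Type*} (s : Finset ι) (M : ι → Multiset (List α)) :
    ofMS (∑ i ∈ s, M i) = ∑ i ∈ s, ofMS (M i) :=
  map_sum ({ toFun := ofMS, map_zero' := by simp [ofMS], map_add' := ofMS_add } :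
    Multiset (List α) →+ (List α →₀ ℝ)) M s

lemma sum_ofMS_smul {E : Type*} [AddCommMonoid E] [Module ℝ E] (M : Multiset (List α))
    (g : List α → E) : (ofMS M).sum (fun u b => b • g u) = (M.map g).sum := by
  induction M using Multiset.induction with
  | empty => simp [ofMS]
  | cons u M ih =>
    rw [← Multiset.singleton_add, ofMS_add,
      Finsupp.sum_add_index' (by simp) (fun _ _ _ => add_smul ..), ih, ofMS_singleton,
      Finsupp.sum_single_index (by simp)]
    simp

lemma sum_ofMS_sum_ofMS (M N : Multiset (List α))
    (F : List α → List α → (List α →₀ ℝ)) :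
    (ofMS M).sum (fun v a => (ofMS N).sum fun w b => (a * b) • F v w) =
      (M.map fun v => (N.map (F v)).sum).sum := by
  simp only [mul_smul, ← Finsupp.smul_sum, sum_ofMS_smul]

lemma sh_ofMS (M N : Multiset (List α)) : sh (ofMS M) (ofMS N) = ofMS (M ⧢ N) := by
  simp only [sh, sum_ofMS_sum_ofMS, shuffleMS, ofMS_bind]

lemma hsW_eq_ofMS (u w : List α) : hsW u w = ofMS (halfShuffles u w) := by
  unfold hsW halfShuffles
  split_ifs <;> simp [ofMS]

lemma hs_ofMS (M N : Multiset (List α)) : hs (ofMS M) (ofMS N) = ofMS (M ≻ N) := by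
  simp only [hs, sum_ofMS_sum_ofMS, halfShuffleMS, ofMS_bind, hsW_eq_ofMS]

lemma shProd_map_single (ws : List (List α)) :
    shProd (ws.map (Finsupp.single · 1)) = ofMS (shuffleProdMS ws) := by
  induction ws with
  | nil => exact (ofMS_singleton []).symm
  | cons w ws ih => rw [List.map_cons, shProd, ih, ← ofMS_singleton, sh_ofMS, shuffleProdMS]

lemma hsList_eq_ofMS (ws : List (List α)) : hsList ws = ofMS (halfShuffleListMS ws) := by
  have hfold : ∀ (us : List (List α)) (M : Multiset (List α)),
      us.foldl (fun x u => hs x (Finsupp.single u 1)) (ofMS M) =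
        ofMS (us.foldl (fun M u => M ≻ {u}) M) := by
    intro us
    induction us with
    | nil => exact fun _ => rfl
    | cons u us ih => exact fun M => by rw [List.foldl_cons, ← ofMS_singleton, hs_ofMS, ih]; rfl
  cases ws with
  | nil => simp [hsList, halfShuffleListMS, ofMS]
  | cons w ws => rw [hsList, halfShuffleListMS, ← hfold, ofMS_singleton]

end

theorem shuffle_eq_sum_halfShuffles_general (d k : ℕ) (hk : 1 ≤ k)
    (w : Fin k → List (Fin d)) (hw : ∀ i, w i ≠ []) :
    shProd ((List.finRange k).map fun i => Finsupp.single (w i) (1 : ℝ)) =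
      ∑ σ : Equiv.Perm (Fin k),
        hsList ((List.finRange k).map fun i => w (σ i)) := by
  obtain ⟨n, rfl⟩ : ∃ n, k = n + 1 := ⟨k - 1, by omega⟩
  have hmap : (List.finRange (n + 1)).map (fun i => Finsupp.single (w i) (1 : ℝ)) =
      (List.ofFn w).map (Finsupp.single · 1) := by
    rw [List.ofFn_eq_map, List.map_map]; rfl
  rw [hmap, shProd_map_single, shuffleProdMS_ofFn_eq_sum_perm w hw, ofMS_sum]
  simp only [hsList_eq_ofMS, List.ofFn_eq_map]
  rfl

/-- the shuffle product of `k` non-empty words is the sum over all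
permutations of the left-bracketed iterated right half-shuffles. -/
theorem shuffle_eq_sum_halfShuffles (d k : ℕ) (hd : 1 ≤ d) (hk : 1 ≤ k)
    (w : Fin k → List (Fin d)) (hw : ∀ i, w i ≠ []) :
    shProd ((List.finRange k).map fun i => Finsupp.single (w i) (1 : ℝ)) =
      ∑ σ : Equiv.Perm (Fin k),
        hsList ((List.finRange k).map fun i => w (σ i)) :=
  shuffle_eq_sum_halfShuffles_general d k hk w hw

end ShufflePaper
end

section
/- Let d ≥ 1, let V_d be the ℝ-linear span of the S_{2d}-orbit {σ · inv(t_{2,d}) : σ ∈ S_{2d}} inside the span of words of length 2d in the alphabet {1,…,d}, and let H be the subgroup of S_{2d} generated by the transpositions (2i−1, 2i+1) and (2i, 2i+2) for 1 ≤ i ≤ d−1. Then the subspace { x ∈ V_d : h·x = sign(h)·x for all h ∈ H } is one-dimensional. -/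
open scoped BigOperators

namespace ShufflePaper

variable {α : Type*}

/-!
The component is spanned by `inv(t_{2,d})` itself. Write the positions of a word of length `2d` as
`2i + b` with `b ∈ {0, 1}`; then `inv(t_{2,d})` is the signed sum of the interleavings
`σ(1)τ(1)⋯σ(d)τ(d)` of two permutations, `H` contains every transposition of two positions of equal
parity, and each such transposition maps `inv(t_{2,d})` to its negative. Conversely, if `H` acts on
`y` by the sign, then `y` vanishes on every word repeating a letter at two positions of equal
parity, and swap induction shows that its coefficient of `σ(1)τ(1)⋯σ(d)τ(d)` is `sign σ · sign τ`
times that of `1 1 2 2 ⋯ d d`. Since every element of `V_d` is supported on words of length `2d`,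
no other words matter.
-/

section Words

def permWord (n : ℕ) (σ : Equiv.Perm (Fin n)) (w : List α) : List α :=
  if h : w.length = n then List.ofFn fun p : Fin n => w.get (Fin.cast h.symm (σ⁻¹ p)) else w

variable {n : ℕ}

lemma exists_eq_ofFn {w : List α} (h : w.length = n) :
    ∃ f : Fin n → α, w = List.ofFn f := by
  subst h
  exact ⟨w.get, (List.ofFn_get w).symm⟩

lemma permWord_ofFn (σ : Equiv.Perm (Fin n)) (f : Fin n → α) :
    permWord n σ (List.ofFn f) = List.ofFn (f ∘ ⇑σ⁻¹) := by
  rw [permWord, dif_pos (List.length_ofFn)]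
  simp only [List.get_ofFn]
  rfl

lemma permWord_of_length_ne (σ : Equiv.Perm (Fin n)) {w : List α} (h : w.length ≠ n) :
    permWord n σ w = w :=
  dif_neg h

lemma length_permWord (σ : Equiv.Perm (Fin n)) (w : List α) :
    (permWord n σ w).length = w.length := by
  by_cases h : w.length = n
  · obtain ⟨f, rfl⟩ := exists_eq_ofFn h
    simp [permWord_ofFn]
  · rw [permWord_of_length_ne σ h]

lemma permWord_mul (σ τ : Equiv.Perm (Fin n)) (w : List α) :
    permWord n (σ * τ) w = permWord n σ (permWord n τ w) := by
  by_cases h : w.length = n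
  · obtain ⟨f, rfl⟩ := exists_eq_ofFn h
    simp only [permWord_ofFn, mul_inv_rev, Equiv.Perm.coe_mul, Function.comp_assoc]
  · rw [permWord_of_length_ne _ h, permWord_of_length_ne _ h, permWord_of_length_ne _ h]

lemma permWord_one (w : List α) : permWord n 1 w = w := by
  by_cases h : w.length = n
  · obtain ⟨f, rfl⟩ := exists_eq_ofFn h
    simp [permWord_ofFn]
  · exact permWord_of_length_ne _ h

lemma permWord_injective (σ : Equiv.Perm (Fin n)) :
    Function.Injective (permWord (α := α) n σ) :=
  Function.LeftInverse.injective (g := permWord n σ⁻¹) fun w => by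
    rw [← permWord_mul, inv_mul_cancel, permWord_one]

end Words

section Action

variable {d n : ℕ}

lemma permAct_eq_lmapDomain (σ : Equiv.Perm (Fin n)) (x : List (Fin d) →₀ ℝ) :
    permAct n σ x = Finsupp.lmapDomain ℝ ℝ (permWord n σ) x := by
  rw [Finsupp.lmapDomain_apply, Finsupp.mapDomain, permAct]
  refine Finsupp.sum_congr fun w _ => ?_
  unfold permWord
  split <;> rfl

lemma permAct_one (x : List (Fin d) →₀ ℝ) : permAct n 1 x = x := by
  rw [permAct_eq_lmapDomain, Finsupp.lmapDomain_apply, funext permWord_one]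
  exact Finsupp.mapDomain_id

lemma permAct_mul (σ τ : Equiv.Perm (Fin n)) (x : List (Fin d) →₀ ℝ) :
    permAct n (σ * τ) x = permAct n σ (permAct n τ x) := by
  simp only [permAct_eq_lmapDomain, Finsupp.lmapDomain_apply, ← Finsupp.mapDomain_comp]
  congr 1
  exact funext (permWord_mul σ τ)

lemma permAct_zsmul (σ : Equiv.Perm (Fin n)) (k : ℤ) (x : List (Fin d) →₀ ℝ) :
    permAct n σ (k • x) = k • permAct n σ x := by
  simp only [permAct_eq_lmapDomain, map_zsmul]

lemma permAct_apply_permWord (σ : Equiv.Perm (Fin n)) (x : List (Fin d) →₀ ℝ)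
    (w : List (Fin d)) :
    permAct n σ x (permWord n σ w) = x w := by
  rw [permAct_eq_lmapDomain, Finsupp.lmapDomain_apply,
    Finsupp.mapDomain_apply (permWord_injective σ)]

lemma permAct_mem_supported_length (σ : Equiv.Perm (Fin n)) {x : List (Fin d) →₀ ℝ}
    (hx : x ∈ Finsupp.supported ℝ ℝ {w | w.length = n}) :
    permAct n σ x ∈ Finsupp.supported ℝ ℝ {w | w.length = n} := by
  rw [permAct_eq_lmapDomain]
  refine Finsupp.supported_comap_lmapDomain ℝ ℝ _ _ ?_
  simpa [Set.preimage, length_permWord] using hx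

end Action

section SignComponent

variable {d n : ℕ}

lemma units_zsmul_units_zsmul {M : Type*} [AddCommGroup M] (u : ℤˣ) (x : M) :
    (u : ℤ) • (u : ℤ) • x = x := by
  rw [smul_smul, ← Units.val_mul, Int.units_mul_self, Units.val_one, one_smul]

def signComponent (n : ℕ) (G : Subgroup (Equiv.Perm (Fin n))) :
    Submodule ℝ (List (Fin d) →₀ ℝ) where
  carrier := {x | ∀ g ∈ G, permAct n g x = (Equiv.Perm.sign g : ℤ) • x}
  add_mem' {x y} hx hy g hg := by
    simp only [permAct_eq_lmapDomain, map_add] at hx hy ⊢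
    rw [hx g hg, hy g hg, smul_add]
  zero_mem' g _ := by simp [permAct_eq_lmapDomain]
  smul_mem' c x hx g hg := by
    simp only [permAct_eq_lmapDomain, map_smul] at hx ⊢
    rw [hx g hg, smul_comm]

lemma mem_signComponent_closure {S : Set (Equiv.Perm (Fin n))} {x : List (Fin d) →₀ ℝ}
    (hS : ∀ g ∈ S, permAct n g x = (Equiv.Perm.sign g : ℤ) • x) :
    x ∈ signComponent n (Subgroup.closure S) := by
  intro g hg
  induction hg using Subgroup.closure_induction with
  | mem g hg => exact hS g hg
  | one => simp [permAct_one]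
  | mul g h _ _ ihg ihh =>
    rw [permAct_mul, ihh, permAct_zsmul, ihg, smul_smul, map_mul, Units.val_mul, mul_comm]
  | inv g _ ih =>
    have h : x = (Equiv.Perm.sign g : ℤ) • permAct n g⁻¹ x := by
      conv_lhs => rw [← permAct_one x, ← inv_mul_cancel g, permAct_mul, ih, permAct_zsmul]
    conv_rhs => rw [Equiv.Perm.sign_inv, h, units_zsmul_units_zsmul]

variable {G : Subgroup (Equiv.Perm (Fin n))} {z : List (Fin d) →₀ ℝ}

lemma apply_permWord_of_mem_signComponent (hz : z ∈ signComponent n G) {g : Equiv.Perm (Fin n)}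
    (hg : g ∈ G) (w : List (Fin d)) : z (permWord n g w) = (Equiv.Perm.sign g : ℤ) • z w := by
  have h := congrArg (· (permWord n g w)) (hz g hg)
  simp only [permAct_apply_permWord, Finsupp.smul_apply] at h
  rw [h, units_zsmul_units_zsmul]

lemma apply_ofFn_comp_swap (hz : z ∈ signComponent n G) {p q : Fin n} (hpq : p ≠ q)
    (hG : Equiv.swap p q ∈ G) (f : Fin n → Fin d) :
    z (List.ofFn (f ∘ Equiv.swap p q)) = -z (List.ofFn f) := by
  have h := apply_permWord_of_mem_signComponent hz hG (List.ofFn f)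
  rwa [permWord_ofFn, Equiv.swap_inv, Equiv.Perm.sign_swap hpq, Units.val_neg, Units.val_one,
    neg_one_smul] at h

lemma apply_ofFn_eq_zero (hz : z ∈ signComponent n G) {p q : Fin n} (hpq : p ≠ q)
    (hG : Equiv.swap p q ∈ G) {f : Fin n → Fin d} (hf : f p = f q) : z (List.ofFn f) = 0 := by
  have h := apply_ofFn_comp_swap hz hpq hG f
  rw [Equiv.comp_swap_eq_update, hf, Function.update_eq_self, ← hf, Function.update_eq_self] at h
  linarith

end SignComponent

section Blocks

variable {d : ℕ}

def blockPos : Fin d × Fin 2 ≃ Fin (2 * d) :=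
  finProdFinEquiv.trans (finCongr (Nat.mul_comm d 2))

@[simp]
lemma blockPos_val (p : Fin d × Fin 2) : (blockPos p : ℕ) = 2 * p.1 + p.2 := by
  simp only [blockPos, Equiv.trans_apply, finCongr_apply, Fin.val_cast, finProdFinEquiv_apply_val]
  ring

def interleave (u v : Fin d → α) (k : Fin (2 * d)) : α :=
  ![u, v] (blockPos.symm k).2 (blockPos.symm k).1

@[simp]
lemma interleave_blockPos_zero (u v : Fin d → α) (i : Fin d) :
    interleave u v (blockPos (i, 0)) = u i := by
  simp [interleave]

@[simp]
lemma interleave_blockPos_one (u v : Fin d → α) (i : Fin d) :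
    interleave u v (blockPos (i, 1)) = v i := by
  simp [interleave]

lemma interleave_inj {u v u' v' : Fin d → α} :
    interleave u v = interleave u' v' ↔ u = u' ∧ v = v' := by
  refine ⟨fun h => ⟨funext fun i => ?_, funext fun i => ?_⟩, fun h => h.1 ▸ h.2 ▸ rfl⟩
  · simpa using congrFun h (blockPos (i, 0))
  · simpa using congrFun h (blockPos (i, 1))

lemma eq_interleave (f : Fin (2 * d) → α) :
    f = interleave (fun i => f (blockPos (i, 0))) (fun i => f (blockPos (i, 1))) := by
  funext k
  obtain ⟨⟨i, b⟩, rfl⟩ := blockPos.surjective k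
  fin_cases b <;> simp

lemma flatMap_pair_eq_ofFn_interleave (u v : Fin d → α) :
    (List.finRange d).flatMap (fun i => [u i, v i]) = List.ofFn (interleave u v) := by
  rw [List.ofFn_mul' (m := 2), List.flatMap_def, ← List.ofFn_eq_map]
  congr 1
  refine List.ofFn_inj.mpr (funext fun i => ?_)
  have hpos (j : Fin 2) : (⟨2 * i + j, by omega⟩ : Fin (2 * d)) = blockPos (i, j) := by
    ext
    simp
  simp [List.ofFn_succ, hpos]

lemma blockPos_injective_left (b : Fin 2) :
    Function.Injective fun i : Fin d => blockPos (i, b) :=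
  blockPos.injective.comp (Prod.mk_left_injective b)

lemma interleave_comp_swap_zero (u v : Fin d → α) (i j : Fin d) :
    interleave u v ∘ Equiv.swap (blockPos (i, 0)) (blockPos (j, 0))
      = interleave (u ∘ Equiv.swap i j) v := by
  funext k
  obtain ⟨⟨c, b⟩, rfl⟩ := blockPos.surjective k
  fin_cases b
  · simp [(blockPos_injective_left 0).swap_apply]
  · rw [Function.comp_apply, Equiv.swap_apply_of_ne_of_ne] <;> simp

lemma interleave_comp_swap_one (u v : Fin d → α) (i j : Fin d) :
    interleave u v ∘ Equiv.swap (blockPos (i, 1)) (blockPos (j, 1))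
      = interleave u (v ∘ Equiv.swap i j) := by
  funext k
  obtain ⟨⟨c, b⟩, rfl⟩ := blockPos.surjective k
  fin_cases b
  · rw [Function.comp_apply, Equiv.swap_apply_of_ne_of_ne] <;> simp
  · simp [(blockPos_injective_left 1).swap_apply]

end Blocks

section Hgrp

variable {d : ℕ}

lemma swap_blockPos_succ_mem_Hgrp (b : Fin 2) {i j : Fin d} (hij : (j : ℕ) = i + 1) :
    Equiv.swap (blockPos (i, b)) (blockPos (j, b)) ∈ Hgrp d := by
  refine Subgroup.subset_closure ⟨2 * i + b, by omega, ?_⟩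
  congr 1 <;> ext
  · simp
  · simp only [blockPos_val]
    omega

lemma swap_blockPos_mem_Hgrp (b : Fin 2) (i j : Fin d) :
    Equiv.swap (blockPos (i, b)) (blockPos (j, b)) ∈ Hgrp d := by
  wlog hij : i < j generalizing i j
  · rcases (not_lt.mp hij).eq_or_lt with h | h
    · rw [h, Equiv.swap_self]
      exact one_mem _
    · rw [Equiv.swap_comm]
      exact this j i h
  obtain ⟨n, hn⟩ : ∃ n, (j : ℕ) = i + n + 1 := ⟨j - i - 1, by omega⟩
  induction n generalizing j with
  | zero => exact swap_blockPos_succ_mem_Hgrp b hn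
  | succ n ih =>
    set m : Fin d := ⟨i + n + 1, by omega⟩
    have hm : Equiv.swap (blockPos (m, b)) (blockPos (j, b)) ∈ Hgrp d :=
      swap_blockPos_succ_mem_Hgrp b (by simp only [m]; omega)
    have him : blockPos (i, b) ≠ blockPos (m, b) :=
      (blockPos_injective_left b).ne (Fin.ne_of_lt (by simp only [Fin.lt_def, m]; omega))
    have hij' : blockPos (i, b) ≠ blockPos (j, b) := (blockPos_injective_left b).ne hij.ne
    rw [Equiv.swap_comm, ← Equiv.swap_mul_swap_mul_swap him hij']
    exact mul_mem (mul_mem hm (ih m (by simp only [Fin.lt_def, m]; omega) rfl)) hm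

lemma exists_swap_blockPos_eq_generator {k : ℕ} (hk : k + 2 < 2 * d) :
    ∃ (b : Fin 2) (i j : Fin d), i ≠ j ∧
      Equiv.swap (⟨k, by omega⟩ : Fin (2 * d)) ⟨k + 2, hk⟩
        = Equiv.swap (blockPos (i, b)) (blockPos (j, b)) :=
  ⟨⟨k % 2, by omega⟩, ⟨k / 2, by omega⟩, ⟨k / 2 + 1, by omega⟩, by simp,
    by congr 1 <;> ext <;> simp only [blockPos_val] <;> omega⟩

end Hgrp

section InvT2

lemma invT2_eq_sum_interleave (d : ℕ) :
    invT2 d = ∑ σ : Equiv.Perm (Fin d), ∑ τ : Equiv.Perm (Fin d),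
      ((Equiv.Perm.sign σ : ℤ) * (Equiv.Perm.sign τ : ℤ)) •
        Finsupp.single (List.ofFn (interleave σ τ)) 1 := by
  simp only [invT2, flatMap_pair_eq_ofFn_interleave]

lemma invT2_mem_supported (d : ℕ) :
    invT2 d ∈ Finsupp.supported ℝ ℝ {w : List (Fin d) | w.length = 2 * d} := by
  rw [invT2_eq_sum_interleave]
  exact Submodule.sum_mem _ fun σ _ => Submodule.sum_mem _ fun τ _ =>
    Submodule.smul_of_tower_mem _ _ (Finsupp.single_mem_supported ℝ _ (List.length_ofFn))

lemma invT2_apply_interleave_id (d : ℕ) : invT2 d (List.ofFn (interleave id id)) = 1 := by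
  simp only [invT2_eq_sum_interleave, Finsupp.finsetSum_apply, Finsupp.smul_apply,
    Finsupp.single_apply, List.ofFn_inj, interleave_inj, ← Equiv.Perm.coe_one, DFunLike.coe_fn_eq,
    ite_and]
  simp

lemma permAct_swap_blockPos_invT2 {d : ℕ} (b : Fin 2) {i j : Fin d} (hij : i ≠ j) :
    permAct (2 * d) (Equiv.swap (blockPos (i, b)) (blockPos (j, b))) (invT2 d) = -invT2 d := by
  simp only [invT2_eq_sum_interleave, permAct_eq_lmapDomain, map_sum, map_zsmul,
    Finsupp.lmapDomain_apply, Finsupp.mapDomain_single, permWord_ofFn, Equiv.swap_inv]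
  fin_cases b
  · simp only [Fin.zero_eta, interleave_comp_swap_zero, ← Equiv.Perm.coe_mul]
    conv_rhs => rw [← Equiv.sum_comp (Equiv.mulRight (Equiv.swap i j))]
    simp [Equiv.Perm.sign_mul, Equiv.Perm.sign_swap hij, Finset.sum_neg_distrib]
  · simp only [Fin.mk_one, interleave_comp_swap_one, ← Equiv.Perm.coe_mul]
    conv_rhs => enter [1, 2, σ]; rw [← Equiv.sum_comp (Equiv.mulRight (Equiv.swap i j))]
    simp [Equiv.Perm.sign_mul, Equiv.Perm.sign_swap hij, Finset.sum_neg_distrib]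

lemma invT2_mem_signComponent (d : ℕ) : invT2 d ∈ signComponent (2 * d) (Hgrp d) := by
  refine mem_signComponent_closure ?_
  rintro _ ⟨k, hk, rfl⟩
  obtain ⟨b, i, j, hij, h⟩ := exists_swap_blockPos_eq_generator hk
  rw [h, permAct_swap_blockPos_invT2 b hij,
    Equiv.Perm.sign_swap ((blockPos_injective_left b).ne hij)]
  simp

end InvT2

section Uniqueness

variable {d : ℕ} {z : List (Fin d) →₀ ℝ}

lemma apply_ofFn_interleave (hz : z ∈ signComponent (2 * d) (Hgrp d))
    (σ τ : Equiv.Perm (Fin d)) :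
    z (List.ofFn (interleave σ τ))
      = ((Equiv.Perm.sign σ : ℤ) * (Equiv.Perm.sign τ : ℤ)) •
          z (List.ofFn (interleave id id)) := by
  have hswap (b : Fin 2) {i j : Fin d} (hij : i ≠ j) (f : Fin (2 * d) → Fin d) :
      z (List.ofFn (f ∘ Equiv.swap (blockPos (i, b)) (blockPos (j, b)))) = -z (List.ofFn f) :=
    apply_ofFn_comp_swap hz ((blockPos_injective_left b).ne hij) (swap_blockPos_mem_Hgrp b i j) f
  have hσ (σ τ : Equiv.Perm (Fin d)) :
      z (List.ofFn (interleave σ τ))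
        = (Equiv.Perm.sign σ : ℤ) • z (List.ofFn (interleave id τ)) := by
    induction σ using Equiv.Perm.swap_induction_on' with
    | one => simp
    | mul_swap σ i j hij ih =>
      rw [Equiv.Perm.coe_mul, ← interleave_comp_swap_zero, hswap 0 hij, ih,
        Equiv.Perm.sign_mul, Equiv.Perm.sign_swap hij]
      simp
  have hτ (τ : Equiv.Perm (Fin d)) :
      z (List.ofFn (interleave id τ))
        = (Equiv.Perm.sign τ : ℤ) • z (List.ofFn (interleave id id)) := by
    induction τ using Equiv.Perm.swap_induction_on' with
    | one => simp
    | mul_swap τ i j hij ih =>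
      rw [Equiv.Perm.coe_mul, ← interleave_comp_swap_one, hswap 1 hij, ih,
        Equiv.Perm.sign_mul, Equiv.Perm.sign_swap hij]
      simp
  rw [hσ, hτ, smul_smul]

lemma eq_zero_of_mem_signComponent_Hgrp
    (hsupp : z ∈ Finsupp.supported ℝ ℝ {w : List (Fin d) | w.length = 2 * d})
    (hz : z ∈ signComponent (2 * d) (Hgrp d)) (h : z (List.ofFn (interleave id id)) = 0) :
    z = 0 := by
  ext w
  by_cases hw : w.length = 2 * d
  swap
  · exact Finsupp.notMem_support_iff.mp fun hmem =>
      hw ((Finsupp.mem_supported ℝ z).mp hsupp hmem)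
  obtain ⟨f, rfl⟩ := exists_eq_ofFn hw
  by_cases hinj : ∀ b, Function.Injective fun i => f (blockPos (i, b))
  · have := apply_ofFn_interleave hz (Equiv.ofBijective _ (hinj 0).bijective_of_finite)
      (Equiv.ofBijective _ (hinj 1).bijective_of_finite)
    rwa [Equiv.coe_ofBijective, Equiv.coe_ofBijective, ← eq_interleave, h, smul_zero] at this
  · simp only [not_forall, Function.not_injective_iff] at hinj
    obtain ⟨b, i, j, hf, hij⟩ := hinj
    exact apply_ofFn_eq_zero hz ((blockPos_injective_left b).ne hij)
      (swap_blockPos_mem_Hgrp b i j) hf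

end Uniqueness

theorem sign_isotypic_component_one_dimensional_general (d : ℕ) :
    ∃ x : List (Fin d) →₀ ℝ,
      (x ∈ Submodule.span ℝ
          (Set.range fun σ : Equiv.Perm (Fin (2 * d)) =>
            permAct (2 * d) σ (invT2 d)) ∧
        ∀ h ∈ Hgrp d, permAct (2 * d) h x = (Equiv.Perm.sign h : ℤ) • x) ∧
      x ≠ 0 ∧
      ∀ y : List (Fin d) →₀ ℝ,
        (y ∈ Submodule.span ℝ
            (Set.range fun σ : Equiv.Perm (Fin (2 * d)) =>
              permAct (2 * d) σ (invT2 d)) ∧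
          ∀ h ∈ Hgrp d, permAct (2 * d) h y = (Equiv.Perm.sign h : ℤ) • y) →
        ∃ c : ℝ, y = c • x := by
  have hspan : Submodule.span ℝ (Set.range fun σ : Equiv.Perm (Fin (2 * d)) =>
      permAct (2 * d) σ (invT2 d)) ≤ Finsupp.supported ℝ ℝ {w | w.length = 2 * d} :=
    Submodule.span_le.mpr <| Set.range_subset_iff.mpr fun σ =>
      permAct_mem_supported_length σ (invT2_mem_supported d)
  have hone := invT2_apply_interleave_id d
  refine ⟨invT2 d, ⟨Submodule.subset_span ⟨1, permAct_one _⟩, invT2_mem_signComponent d⟩,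
    fun h0 => by simp [h0] at hone, ?_⟩
  rintro y ⟨hyV, hyH⟩
  refine ⟨y (List.ofFn (interleave id id)), sub_eq_zero.mp ?_⟩
  refine eq_zero_of_mem_signComponent_Hgrp
    (sub_mem (hspan hyV) (Submodule.smul_mem _ _ (invT2_mem_supported d)))
    (sub_mem hyH (Submodule.smul_mem _ _ (invT2_mem_signComponent d))) ?_
  simp [hone]

/-- inside the span `V_d` of the `S_{2d}`-orbit of `inv(t_{2,d})`,
the subspace on which `H` acts by the sign character is one-dimensional. -/
theorem sign_isotypic_component_one_dimensional (d : ℕ) (hd : 1 ≤ d) :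
    ∃ x : List (Fin d) →₀ ℝ,
      (x ∈ Submodule.span ℝ
          (Set.range fun σ : Equiv.Perm (Fin (2 * d)) =>
            permAct (2 * d) σ (invT2 d)) ∧
        ∀ h ∈ Hgrp d, permAct (2 * d) h x = (Equiv.Perm.sign h : ℤ) • x) ∧
      x ≠ 0 ∧
      ∀ y : List (Fin d) →₀ ℝ,
        (y ∈ Submodule.span ℝ
            (Set.range fun σ : Equiv.Perm (Fin (2 * d)) =>
              permAct (2 * d) σ (invT2 d)) ∧
          ∀ h ∈ Hgrp d, permAct (2 * d) h y = (Equiv.Perm.sign h : ℤ) • y) →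
        ∃ c : ℝ, y = c • x :=
  sign_isotypic_component_one_dimensional_general d

end ShufflePaper
end

section
/- Let A be a commutative ℝ-algebra, let d be a positive even integer, let M ∈ A^{d×d} be skew-symmetric (Mᵀ = −M), let v ∈ A^d and λ ∈ A. Then det(M + λ v vᵀ) = det(M). -/
/-!
Over any commutative ring, `det (A + u vᵀ) = det A + vᵀ (adj A) u`: the rows of `A + u vᵀ` are
affine in `u`, and a term in which two rows are replaced by multiples of `v` vanishes. If `M` is
skew-symmetric of even size `d`, then `adj M = adj (-Mᵀ) = (-1)^(d-1) (adj M)ᵀ` is skew-symmetric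
as well, so the quadratic form `vᵀ (adj M) v` vanishes once `2` is cancellable, e.g. over an
`ℝ`-algebra.
-/

open Matrix

namespace Matrix

variable {n R : Type*} [CommRing R]

theorem add_vecMulVec_single_eq_updateRow [DecidableEq n] (A : Matrix n n R) (i : n) (c : R)
    (v : n → R) : A + vecMulVec (Pi.single i c) v = A.updateRow i (A i + c • v) := by
  ext k j
  by_cases hk : k = i
  · subst hk; simp [vecMulVec_apply]
  · simp [vecMulVec_apply, hk]

variable [Fintype n]

theorem dotProduct_mulVec_self_eq_zero_of_transpose_eq_neg [IsAddTorsionFree R]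
    {A : Matrix n n R} (hA : Aᵀ = -A) (v : n → R) : v ⬝ᵥ A *ᵥ v = 0 := by
  refine self_eq_neg.mp ?_
  calc v ⬝ᵥ A *ᵥ v = v ⬝ᵥ Aᵀ *ᵥ v := by
        rw [mulVec_transpose, dotProduct_mulVec, dotProduct_comm]
    _ = -(v ⬝ᵥ A *ᵥ v) := by rw [hA, neg_mulVec, dotProduct_neg]

variable [DecidableEq n]

theorem det_add_vecMulVec_single (A : Matrix n n R) (i : n) (c : R) (v : n → R) :
    (A + vecMulVec (Pi.single i c) v).det = A.det + c * (A.updateRow i v).det := by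
  rw [add_vecMulVec_single_eq_updateRow, det_updateRow_add, updateRow_eq_self,
    det_updateRow_smul]

theorem det_add_vecMulVec_of_row_eq {A : Matrix n n R} {k : n} {u v : n → R} (hA : A k = v)
    (hu : u k = 0) : (A + vecMulVec u v).det = A.det :=
  det_eq_of_forall_row_eq_smul_add_const u k hu fun i j => by simp [vecMulVec_apply, hA]

theorem det_updateRow_add_vecMulVec (A : Matrix n n R) (u v : n → R) (i : n) :
    ((A + vecMulVec u v).updateRow i v).det = (A.updateRow i v).det := by
  have hrow : (A + vecMulVec u v).updateRow i v =
      A.updateRow i v + vecMulVec (Function.update u i 0) v := by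
    ext k j
    by_cases hk : k = i
    · subst hk; simp [vecMulVec_apply]
    · simp [vecMulVec_apply, hk]
  rw [hrow, det_add_vecMulVec_of_row_eq updateRow_self (Function.update_self i 0 u)]

theorem det_add_vecMulVec_eq_add_sum (A : Matrix n n R) (u v : n → R) :
    (A + vecMulVec u v).det = A.det + ∑ i, u i * (A.updateRow i v).det := by
  suffices h : ∀ s : Finset n, (A + vecMulVec (∑ i ∈ s, Pi.single i (u i)) v).det =
      A.det + ∑ i ∈ s, u i * (A.updateRow i v).det by
    simpa only [Finset.univ_sum_single] using h Finset.univ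
  intro s
  induction s using Finset.induction_on with
  | empty => simp
  | insert i s hi ih =>
    rw [Finset.sum_insert hi, Finset.sum_insert hi, add_comm (Pi.single i (u i) : n → R),
      add_vecMulVec, ← add_assoc, det_add_vecMulVec_single, det_updateRow_add_vecMulVec, ih]
    ring

theorem det_add_vecMulVec (A : Matrix n n R) (u v : n → R) :
    (A + vecMulVec u v).det = A.det + v ⬝ᵥ adjugate A *ᵥ u := by
  rw [det_add_vecMulVec_eq_add_sum, dotProduct_mulVec, ← mulVec_transpose, adjugate_transpose,
    ← cramer_eq_adjugate_mulVec, dotProduct_comm]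
  simp only [dotProduct, cramer_transpose_apply]

theorem adjugate_transpose_eq_neg_of_transpose_eq_neg {A : Matrix n n R} (hA : Aᵀ = -A)
    (hn : Even (Fintype.card n)) : (adjugate A)ᵀ = -adjugate A := by
  rcases Nat.eq_zero_or_pos (Fintype.card n) with h0 | hpos
  · have : IsEmpty n := Fintype.card_eq_zero_iff.mp h0
    exact Subsingleton.elim _ _
  have hodd : Odd (Fintype.card n - 1) := Nat.Even.sub_odd hpos hn odd_one
  rw [adjugate_transpose, hA, ← neg_one_smul R A, adjugate_smul, hodd.neg_one_pow, neg_one_smul]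

end Matrix

theorem det_skew_add_rank_one_even_general (A : Type*) [CommRing A] [Algebra ℝ A]
    (d : ℕ) (hde : Even d)
    (M : Matrix (Fin d) (Fin d) A) (hM : Mᵀ = -M) (v : Fin d → A) (l : A) :
    (M + Matrix.of fun i j => l * v i * v j).det = M.det := by
  have : IsAddTorsionFree A := .of_isTorsionFree ℝ A
  have hadj : (adjugate M)ᵀ = -adjugate M :=
    adjugate_transpose_eq_neg_of_transpose_eq_neg hM (by simpa using hde)
  change (M + vecMulVec (l • v) v).det = M.det
  rw [det_add_vecMulVec, mulVec_smul, dotProduct_smul,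
    dotProduct_mulVec_self_eq_zero_of_transpose_eq_neg hadj, smul_zero, add_zero]

/-- for a skew-symmetric matrix `M` of even size over a
commutative ℝ-algebra, `det(M + λ v vᵀ) = det(M)`. -/
theorem det_skew_add_rank_one_even (A : Type*) [CommRing A] [Algebra ℝ A]
    (d : ℕ) (hd : 0 < d) (hde : Even d)
    (M : Matrix (Fin d) (Fin d) A) (hM : Mᵀ = -M) (v : Fin d → A) (l : A) :
    (M + Matrix.of fun i j => l * v i * v j).det = M.det :=
  det_skew_add_rank_one_even_general A d hde M hM v l
end

section
/- Let A be a commutative ℝ-algebra, let d be a positive odd integer, let M ∈ A^{d×d} be skew-symmetric (Mᵀ = −M), let v ∈ A^d and λ ∈ A. Then det(M + λ v vᵀ) = Σ_{i=1}^d det(R_i), where R_i is the matrix obtained from M by replacing its i-th row by the i-th row of λ v vᵀ. -/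
/-!
Expanding `det (M + λ v vᵀ)` multilinearly in the rows, every term that takes two or more rows
from `λ v vᵀ` has two rows proportional to `v` and vanishes. What remains is `det M` plus the
sum of the `det Rᵢ`, and `det M = det Mᵀ = (-1)ᵈ det M = -det M` forces `det M = 0`, since `2`
is invertible in an `ℝ`-algebra.
-/

open Matrix

namespace AlternatingMap

variable {R M N ι : Type*} [Semiring R] [AddCommMonoid M] [Module R M] [AddCommMonoid N]
  [Module R N] (f : M [⋀^ι]→ₗ[R] N)

theorem map_eq_zero_of_eq_smul_of_eq_smul [DecidableEq ι] {v : ι → M} {i j : ι} (hij : i ≠ j)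
    {a b : R} {w : M} (hi : v i = a • w) (hj : v j = b • w) : f v = 0 := by
  set u := Function.update v i w
  have hu : u j = b • u i := by simp [u, Function.update_of_ne hij.symm, hj]
  have hv : f v = a • f u := by rw [← map_update_smul, ← hi, Function.update_eq_self]
  have hu0 : f u = b • f (Function.update u j (u i)) := by
    rw [← map_update_smul, ← hu, Function.update_eq_self]
  rw [hv, hu0, map_update_self f u hij.symm, smul_zero, smul_zero]

theorem map_add_smul_const [DecidableEq ι] [Fintype ι] (x : ι → M) (c : ι → R) (w : M) :
    f (x + fun i => c i • w) = f x + ∑ i, f (Function.update x i (c i • w)) := by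
  set y : ι → M := fun i => c i • w
  set S := Finset.univ.map ⟨({·} : ι → Finset ι), Finset.singleton_injective⟩
  have hvanish : ∀ t ∉ insert ∅ S, f (t.piecewise y x) = 0 := by
    intro t ht
    obtain ⟨ht0, ht1⟩ : t ≠ ∅ ∧ ∀ i, t ≠ {i} := by simpa [S, eq_comm] using ht
    obtain ⟨i, hi, j, hj, hij⟩ :=
      (Finset.nonempty_iff_ne_empty.2 ht0).exists_eq_singleton_or_nontrivial.resolve_left
        (by simpa using ht1)
    exact f.map_eq_zero_of_eq_smul_of_eq_smul hij (Finset.piecewise_eq_of_mem _ _ _ hi)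
      (Finset.piecewise_eq_of_mem _ _ _ hj)
  calc f (x + y) = ∑ t : Finset ι, f (t.piecewise y x) := by
        rw [map_add_univ, ← Equiv.sum_comp (Function.Involutive.toPerm _ compl_involutive)]
        exact Finset.sum_congr rfl fun t _ => congrArg f (Finset.piecewise_compl t x y)
    _ = ∑ t ∈ insert ∅ S, f (t.piecewise y x) :=
        (Finset.sum_subset (Finset.subset_univ _) fun t _ ht => hvanish t ht).symm
    _ = f x + ∑ i, f (Function.update x i (y i)) := by
        rw [Finset.sum_insert (by simp [S])]
        simp [S, Finset.piecewise_singleton]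

end AlternatingMap

namespace Matrix

variable {n R : Type*} [DecidableEq n] [Fintype n] [CommRing R]

theorem det_add_vecMulVec_s12 (M : Matrix n n R) (c w : n → R) :
    (M + vecMulVec c w).det = M.det + ∑ i, (M.updateRow i (c i • w)).det :=
  detRowAlternating.map_add_smul_const M c w

theorem det_eq_zero_of_transpose_eq_neg {M : Matrix n n R} (hM : Mᵀ = -M)
    (hn : Odd (Fintype.card n)) (h2 : IsLeftRegular (2 : R)) : M.det = 0 := by
  have hneg : M.det = -M.det := by
    conv_lhs => rw [← det_transpose, hM, det_neg, hn.neg_one_pow, neg_one_mul]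
  refine h2 ?_
  simp only [mul_zero, two_mul]
  exact neg_eq_iff_add_eq_zero.1 hneg.symm

end Matrix

theorem det_skew_add_rank_one_odd_general (A : Type*) [CommRing A] [Algebra ℝ A]
    (d : ℕ) (hdo : Odd d)
    (M : Matrix (Fin d) (Fin d) A) (hM : Mᵀ = -M) (v : Fin d → A) (l : A) :
    (M + Matrix.of fun i j => l * v i * v j).det =
      ∑ i : Fin d, (M.updateRow i fun j => l * v i * v j).det := by
  have h2 : IsUnit (2 : A) := by
    rw [← map_ofNat (algebraMap ℝ A) 2]
    exact (isUnit_of_invertible _).map _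
  have hdet : M.det = 0 :=
    det_eq_zero_of_transpose_eq_neg hM (by rwa [Fintype.card_fin]) h2.isRegular.left
  have hexpand := det_add_vecMulVec_s12 M (fun i => l * v i) v
  rwa [hdet, zero_add] at hexpand

/-- for a skew-symmetric matrix `M` of odd size over a commutative
ℝ-algebra, `det(M + λ v vᵀ) = ∑ᵢ det(Rᵢ)`, where `Rᵢ` is `M` with its `i`-th
row replaced by the `i`-th row of `λ v vᵀ`. -/
theorem det_skew_add_rank_one_odd (A : Type*) [CommRing A] [Algebra ℝ A]
    (d : ℕ) (hd : 0 < d) (hdo : Odd d)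
    (M : Matrix (Fin d) (Fin d) A) (hM : Mᵀ = -M) (v : Fin d → A) (l : A) :
    (M + Matrix.of fun i j => l * v i * v j).det =
      ∑ i : Fin d, (M.updateRow i fun j => l * v i * v j).det :=
  det_skew_add_rank_one_odd_general A d hdo M hM v l
end
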